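/- Let 0 < α < 1 and let ψ be a C¹ increasing function with ψ' never zero. The function u(x,t) = e^{−x} · E_α((ψ(t)−ψ(a))^α) satisfies the nonlinear time-fractional gas-dynamic equation ^C D^{α,ψ}_{a+} u + u · ∂u/∂x − u + u² = 0 with initial condition u(x,a) = e^{−x}. -/

import Mathlib

open Real

noncomputable def psiInt (α : ℝ) (ψ : ℝ → ℝ) (a : ℝ) (f : ℝ → ℝ) (t : ℝ) : ℝ :=
  (1 / Real.Gamma α) * ∫ τ in a..t, deriv ψ τ * (ψ t - ψ τ) ^ (α - 1) * f τ

noncomputable def caputo (α : ℝ) (ψ : ℝ → ℝ) (a : ℝ) (f : ℝ → ℝ) : ℝ → ℝ :=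
  psiInt (1 - α) ψ a (fun τ => deriv f τ / deriv ψ τ)

noncomputable def ML (α z : ℝ) : ℝ := ∑' m : ℕ, z ^ m / Real.Gamma (m * α + 1)

/-!
Write `w = ψ - ψ a`. The series `E_α (w ^ α) = ∑ w ^ (m α) / Γ (m α + 1)` can be differentiated
termwise, and the substitution `s = w τ` turns the `ψ`-fractional integral of each differentiated
term into a Beta integral, so the Caputo derivative maps the term of index `m + 1` to the term of
index `m`. All these terms are nonnegative, so integral and sum commute and `E_α (w ^ α)` is a fixed
point of the Caputo derivative; the factor `e^{-x}` then makes the nonlinear terms cancel.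
The series converges for `0 < α < 1` by the ratio test, through the log-convexity bound
`Γ (x + 1) ≤ Γ (x + α) (x + α) ^ (1 - α)`.
-/

open Set Filter Topology MeasureTheory

lemma Gamma_add_one_le_Gamma_add_mul_rpow {α x : ℝ} (hα : 0 < α) (hα1 : α < 1) (hx : 0 < x) :
    Gamma (x + 1) ≤ Gamma (x + α) * (x + α) ^ (1 - α) := by
  have hxα : 0 < x + α := by linarith
  have hG : 0 < Gamma (x + α) := Gamma_pos_of_pos hxα
  have h := Gamma_mul_add_mul_le_rpow_Gamma_mul_rpow_Gamma hxα (by linarith : 0 < x + α + 1)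
    hα (by linarith : 0 < 1 - α) (by ring)
  rwa [show α * (x + α) + (1 - α) * (x + α + 1) = x + 1 by ring, Gamma_add_one hxα.ne',
    mul_rpow hxα.le hG.le, mul_left_comm, ← rpow_add hG, add_sub_cancel, rpow_one, mul_comm] at h

lemma tendsto_Gamma_div_Gamma_add {α : ℝ} (hα : 0 < α) (hα1 : α < 1) :
    Tendsto (fun x => Gamma x / Gamma (x + α)) atTop (𝓝 0) := by
  have hlim : Tendsto (fun x : ℝ => (1 + α / x) * (x + α) ^ (-α)) atTop (𝓝 0) := by
    simpa using ((tendsto_const_nhds.div_atTop tendsto_id).const_add 1).mul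
      ((tendsto_rpow_neg_atTop hα).comp (tendsto_atTop_add_const_right _ α tendsto_id))
  refine tendsto_of_tendsto_of_tendsto_of_le_of_le' tendsto_const_nhds hlim ?_ ?_
  · filter_upwards [eventually_gt_atTop 0] with x hx
    exact div_nonneg (Gamma_pos_of_pos hx).le (Gamma_pos_of_pos (by linarith)).le
  · filter_upwards [eventually_gt_atTop 0] with x hx
    have hxα : 0 < x + α := by linarith
    have hbound := Gamma_add_one_le_Gamma_add_mul_rpow hα hα1 hx
    rw [Gamma_add_one hx.ne'] at hbound
    rw [div_le_iff₀ (Gamma_pos_of_pos hxα), show 1 + α / x = (x + α) / x by field_simp]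
    calc Gamma x = x * Gamma x / x := by field_simp
      _ ≤ Gamma (x + α) * (x + α) ^ (1 - α) / x := by gcongr
      _ = (x + α) / x * (x + α) ^ (-α) * Gamma (x + α) := by
        rw [show 1 - α = 1 + -α by ring, rpow_add hxα, rpow_one]; ring

lemma summable_ML_series {α : ℝ} (hα : 0 < α) (hα1 : α < 1) (z : ℝ) :
    Summable (fun m : ℕ => z ^ m / Gamma (m * α + 1)) := by
  have hx : Tendsto (fun m : ℕ => (m : ℝ) * α + 1) atTop atTop :=
    tendsto_atTop_add_const_right _ 1 (tendsto_natCast_atTop_atTop.atTop_mul_const hα)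
  have hratio := ((tendsto_Gamma_div_Gamma_add hα hα1).comp hx).const_mul |z|
  rw [mul_zero] at hratio
  refine summable_of_ratio_norm_eventually_le (r := 1 / 2) (by norm_num) ?_
  filter_upwards [hratio.eventually_lt_const (by norm_num : (0 : ℝ) < 1 / 2)] with m hm
  have hG : 0 < Gamma (m * α + 1) := Gamma_pos_of_pos (by positivity)
  calc ‖z ^ (m + 1) / Gamma ((m + 1 : ℕ) * α + 1)‖
      = |z| * (Gamma (m * α + 1) / Gamma (m * α + 1 + α)) * ‖z ^ m / Gamma (m * α + 1)‖ := by
        rw [norm_div, norm_div, norm_pow, norm_pow, Real.norm_eq_abs, Real.norm_of_nonneg hG.le,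
          Real.norm_of_nonneg (Gamma_pos_of_pos (by positivity)).le]
        push_cast
        rw [show ((m : ℝ) + 1) * α + 1 = m * α + 1 + α by ring]
        field_simp
        ring
    _ ≤ 1 / 2 * ‖z ^ m / Gamma (m * α + 1)‖ := by gcongr; exact hm.le

lemma hasDerivAt_ML {α : ℝ} (hα : 0 < α) (hα1 : α < 1) (z : ℝ) :
    HasDerivAt (ML α) (∑' m : ℕ, (m + 1) * z ^ m / Gamma ((m + 1) * α + 1)) z := by
  set R := |z| + 1
  have hR : 1 ≤ R := by simp [R]
  have hz : z ∈ Ioo (-R) R := ⟨by linarith [neg_abs_le z], by linarith [le_abs_self z]⟩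
  have hbound : ∀ (n : ℕ), ∀ y ∈ Ioo (-R) R,
      ‖n * y ^ (n - 1) / Gamma (n * α + 1)‖ ≤ (2 * R) ^ n / Gamma (n * α + 1) := by
    intro n y hy
    have hG : 0 < Gamma (n * α + 1) := Gamma_pos_of_pos (by positivity)
    rw [norm_div, Real.norm_of_nonneg hG.le]
    gcongr
    calc ‖(n : ℝ) * y ^ (n - 1)‖ = n * |y| ^ (n - 1) := by simp
      _ ≤ 2 ^ n * R ^ n := by
        gcongr
        · exact_mod_cast Nat.lt_two_pow_self.le
        · exact (pow_le_pow_left₀ (abs_nonneg y) (abs_lt.2 hy).le _).trans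
            (pow_le_pow_right₀ hR (Nat.sub_le n 1))
      _ = (2 * R) ^ n := (mul_pow 2 R n).symm
  have hderiv := hasDerivAt_tsum_of_isPreconnected (summable_ML_series hα hα1 (2 * R)) isOpen_Ioo
    isPreconnected_Ioo (fun n y _ => (hasDerivAt_pow n y).div_const _) hbound hz
    (summable_ML_series hα hα1 z) hz
  have hsum : Summable (fun n : ℕ => n * z ^ (n - 1) / Gamma (n * α + 1)) :=
    .of_norm_bounded (summable_ML_series hα hα1 (2 * R)) (fun n => hbound n z hz)
  rw [hsum.tsum_eq_zero_add] at hderiv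
  simp only [CharP.cast_eq_zero, zero_mul, zero_div, zero_add, Nat.cast_add, Nat.cast_one,
    Nat.add_sub_cancel] at hderiv
  exact hderiv

lemma ML_zero (α : ℝ) : ML α 0 = 1 := by
  rw [ML, tsum_eq_single 0 (fun m hm => by rw [zero_pow hm, zero_div])]
  simp

lemma integral_rpow_mul_sub_rpow {p q k : ℝ} (hp : 0 < p) (hq : 0 < q) (hk : 0 < k) :
    ∫ x in 0..k, x ^ (p - 1) * (k - x) ^ (q - 1) =
      k ^ (p + q - 1) * (Gamma p * Gamma q / Gamma (p + q)) := by
  apply Complex.ofReal_injective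
  have hcomplex : EqOn (fun x : ℝ => ((x ^ (p - 1) * (k - x) ^ (q - 1) : ℝ) : ℂ))
      (fun x : ℝ => (x : ℂ) ^ ((p : ℂ) - 1) * ((k : ℂ) - x) ^ ((q : ℂ) - 1)) (uIcc 0 k) := by
    intro x hx
    rw [uIcc_of_le hk.le] at hx
    push_cast [Complex.ofReal_cpow hx.1, Complex.ofReal_cpow (sub_nonneg.2 hx.2)]
    rfl
  rw [← intervalIntegral.integral_ofReal, intervalIntegral.integral_congr hcomplex,
    Complex.betaIntegral_scaled _ _ hk,
    Complex.betaIntegral_eq_Gamma_mul_div _ _ (by simpa) (by simpa)]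
  push_cast [Complex.ofReal_cpow hk.le, ← Complex.Gamma_ofReal]
  rfl

lemma integral_deriv_mul_rpow_mul_rpow {ψ : ℝ → ℝ} (hψ : Differentiable ℝ ψ) (hmono : Monotone ψ)
    {a t p q : ℝ} (hp : 0 < p) (hq : 0 < q) (hψat : ψ a < ψ t) :
    ∫ τ in a..t, deriv ψ τ * ((ψ t - ψ τ) ^ (q - 1) * (ψ τ - ψ a) ^ (p - 1)) =
      (ψ t - ψ a) ^ (p + q - 1) * (Gamma p * Gamma q / Gamma (p + q)) := by
  have hsubst := intervalIntegral.integral_comp_mul_deriv_of_deriv_nonneg (a := a) (b := t)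
    (f := fun τ => ψ τ - ψ a) (g := fun x => x ^ (p - 1) * (ψ t - ψ a - x) ^ (q - 1))
    (hψ.continuous.sub continuous_const).continuousOn
    (fun τ _ => (hψ τ).hasDerivAt.sub_const (ψ a)) (fun _ _ => hmono.deriv_nonneg)
  simp only [Function.comp_def, sub_self, sub_sub_sub_cancel_right] at hsubst
  rw [← integral_rpow_mul_sub_rpow hp hq (sub_pos.2 hψat), ← hsubst]
  congr 1 with τ
  ring

lemma intervalIntegral_tsum_of_nonneg {F : ℕ → ℝ → ℝ} {a t : ℝ} (hat : a ≤ t)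
    (hint : ∀ m, IntervalIntegrable (F m) volume a t) (hnonneg : ∀ m, ∀ τ ∈ Ioc a t, 0 ≤ F m τ)
    (hsum : Summable fun m => ∫ τ in a..t, F m τ) :
    ∫ τ in a..t, ∑' m, F m τ = ∑' m, ∫ τ in a..t, F m τ := by
  simp only [intervalIntegral.integral_of_le hat] at hsum ⊢
  refine (integral_tsum_of_summable_integral_norm (fun m => (hint m).1) (hsum.congr fun m => ?_)).symm
  exact setIntegral_congr_fun measurableSet_Ioc fun τ hτ => (Real.norm_of_nonneg (hnonneg m τ hτ)).symm

lemma hasDerivAt_ML_comp_rpow {α : ℝ} (hα : 0 < α) (hα1 : α < 1) {ψ : ℝ → ℝ} {a τ d : ℝ}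
    (hd : HasDerivAt ψ d τ) (hτ : ψ a < ψ τ) :
    HasDerivAt (fun s => ML α ((ψ s - ψ a) ^ α))
      (∑' m : ℕ, d * (ψ τ - ψ a) ^ ((m + 1) * α - 1) / Gamma ((m + 1) * α)) τ := by
  have hw : 0 < ψ τ - ψ a := sub_pos.2 hτ
  have hpow : HasDerivAt (fun s => (ψ s - ψ a) ^ α) (d * α * (ψ τ - ψ a) ^ (α - 1)) τ :=
    (hd.sub_const (ψ a)).rpow_const (Or.inl hw.ne')
  refine ((hasDerivAt_ML hα hα1 _).comp τ hpow).congr_deriv ?_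
  rw [← tsum_mul_right]
  congr 1 with m
  have hp : 0 < ((m : ℝ) + 1) * α := by positivity
  have hexp : ((ψ τ - ψ a) ^ α) ^ m * (ψ τ - ψ a) ^ (α - 1) =
      (ψ τ - ψ a) ^ ((m + 1) * α - 1) := by
    rw [← rpow_natCast, ← rpow_mul hw.le, ← rpow_add hw]
    ring_nf
  rw [Gamma_add_one hp.ne', ← hexp]
  field_simp

lemma caputo_const_mul (α : ℝ) (ψ : ℝ → ℝ) (a c : ℝ) (f : ℝ → ℝ) (t : ℝ) :
    caputo α ψ a (fun s => c * f s) t = c * caputo α ψ a f t := by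
  simp only [caputo, psiInt, deriv_const_mul_field']
  rw [mul_left_comm c, ← intervalIntegral.integral_const_mul c]
  congr 1
  refine intervalIntegral.integral_congr fun τ _ => ?_
  ring

lemma caputo_ML_comp_rpow {α : ℝ} (hα : 0 < α) (hα1 : α < 1) {ψ : ℝ → ℝ}
    (hψ : Differentiable ℝ ψ) (hmono : StrictMono ψ) (hψ' : ∀ x, deriv ψ x ≠ 0) {a t : ℝ}
    (hat : a < t) :
    caputo α ψ a (fun s => ML α ((ψ s - ψ a) ^ α)) t = ML α ((ψ t - ψ a) ^ α) := by
  set F : ℕ → ℝ → ℝ := fun m τ => (ψ t - ψ τ) ^ (1 - α - 1) *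
    (deriv ψ τ * (ψ τ - ψ a) ^ ((m + 1) * α - 1) / Gamma ((m + 1) * α))
  have hT : 0 < ψ t - ψ a := sub_pos.2 (hmono hat)
  have hintegrand : ∀ τ ∈ Ioc a t, deriv ψ τ * (ψ t - ψ τ) ^ (1 - α - 1) *
      (deriv (fun s => ML α ((ψ s - ψ a) ^ α)) τ / deriv ψ τ) = ∑' m, F m τ := by
    intro τ hτ
    rw [(hasDerivAt_ML_comp_rpow hα hα1 (hψ τ).hasDerivAt (hmono hτ.1)).deriv, mul_comm (deriv ψ τ),
      mul_assoc, mul_div_cancel₀ _ (hψ' τ), ← tsum_mul_left]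
  have hvalue : ∀ m : ℕ, ∫ τ in a..t, F m τ =
      Gamma (1 - α) * (((ψ t - ψ a) ^ α) ^ m / Gamma (m * α + 1)) := by
    intro m
    have hp : 0 < ((m : ℝ) + 1) * α := by positivity
    calc ∫ τ in a..t, F m τ
        = (∫ τ in a..t, deriv ψ τ * ((ψ t - ψ τ) ^ (1 - α - 1) *
            (ψ τ - ψ a) ^ ((m + 1) * α - 1))) / Gamma ((m + 1) * α) := by
          rw [← intervalIntegral.integral_div]
          refine intervalIntegral.integral_congr fun τ _ => ?_
          simp only [F]
          ring
      _ = _ := by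
          rw [integral_deriv_mul_rpow_mul_rpow hψ hmono.monotone hp (by linarith) (hmono hat),
            show ((m : ℝ) + 1) * α + (1 - α) = m * α + 1 by ring,
            add_sub_cancel_right, mul_comm _ α, rpow_mul hT.le, rpow_natCast]
          field_simp [(Gamma_pos_of_pos hp).ne']
  have hnonneg : ∀ m, ∀ τ ∈ Ioc a t, 0 ≤ F m τ := by
    intro m τ hτ
    have hΓ := Gamma_pos_of_pos (by positivity : 0 < ((m : ℝ) + 1) * α)
    have hψ'_nonneg := hmono.monotone.deriv_nonneg (x := τ)
    have hleft := sub_nonneg.2 (hmono.monotone hτ.1.le)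
    have hright := sub_nonneg.2 (hmono.monotone hτ.2)
    positivity
  -- a nonzero integral certifies integrability of the (singular) integrand
  have hint : ∀ m, IntervalIntegrable (F m) volume a t := fun m =>
    intervalIntegral.intervalIntegrable_of_integral_ne_zero (by
      rw [hvalue m]
      have hΓ := Gamma_pos_of_pos (by positivity : 0 < (m : ℝ) * α + 1)
      positivity)
  have hsum : Summable fun m => ∫ τ in a..t, F m τ := by
    simp only [hvalue]
    exact (summable_ML_series hα hα1 _).mul_left _
  calc caputo α ψ a (fun s => ML α ((ψ s - ψ a) ^ α)) t
      = 1 / Gamma (1 - α) * ∫ τ in a..t, ∑' m, F m τ := by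
        rw [caputo, psiInt, intervalIntegral.integral_congr_ae (Eventually.of_forall fun τ hτ =>
          hintegrand τ (by rwa [uIoc_of_le hat.le] at hτ))]
    _ = ML α ((ψ t - ψ a) ^ α) := by
        rw [intervalIntegral_tsum_of_nonneg hat.le hint hnonneg hsum, tsum_congr hvalue,
          tsum_mul_left, ML, one_div, inv_mul_cancel_left₀ (Gamma_pos_of_pos (by linarith)).ne']

theorem stmt11 (a : ℝ) (ψ : ℝ → ℝ) (hψ : ContDiff ℝ 1 ψ)
    (hmono : StrictMono ψ) (hψ' : ∀ x, deriv ψ x ≠ 0)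
    (α : ℝ) (hα : 0 < α) (hα1 : α < 1)
    (u : ℝ → ℝ → ℝ)
    (hu : ∀ x t, u x t = Real.exp (-x) * ML α ((ψ t - ψ a) ^ α)) :
    (∀ x t, a < t →
        caputo α ψ a (fun s => u x s) t + u x t * deriv (fun y => u y t) x -
            u x t + (u x t) ^ 2 = 0) ∧
      ∀ x, u x a = Real.exp (-x) := by
  refine ⟨fun x t hat => ?_, fun x => ?_⟩
  · have hux : deriv (fun y => u y t) x = -u x t := by
      simp_rw [hu]
      rw [((hasDerivAt_neg x).exp.mul_const _).deriv]
      ring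
    rw [funext (hu x), caputo_const_mul,
      caputo_ML_comp_rpow hα hα1 (hψ.differentiable one_ne_zero) hmono hψ' hat, hux, hu x t]
    ring
  · rw [hu, sub_self, zero_rpow hα.ne', ML_zero, mul_one]
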